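/- The function κ ↦ |K_κ(w)| is upper semi-continuous from the left: for κ > 0, |K_κ(w)| = lim_{κ'↑κ} |K_{κ'}(w)|. -/

import Mathlib

open MeasureTheory Set Filter

/-- A graphon: symmetric measurable `w : [0,1]² → [0,1]` (stated on all of ℝ²). -/
def Graphon (w : ℝ → ℝ → ℝ) : Prop :=
  Measurable (Function.uncurry w) ∧ (∀ x y, w x y = w y x) ∧
    ∀ x y, w x y ∈ Set.Icc (0 : ℝ) 1

/-- Degree of `x` restricted to `K`: `d_w^K(x) = ∫_K w(x,y) dy`. -/
noncomputable def degK (w : ℝ → ℝ → ℝ) (K : Set ℝ) (x : ℝ) : ℝ := ∫ y in K, w x y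

/-- Iterated peeling sets: `coreIter w κ n = K^{n+1}_κ(w)` (so index 0 is `K¹`). -/
noncomputable def coreIter (w : ℝ → ℝ → ℝ) (κ : ℝ) : ℕ → Set ℝ
  | 0 => {x ∈ Set.Icc (0 : ℝ) 1 | κ ≤ degK w (Set.Icc 0 1) x}
  | n + 1 => {x ∈ coreIter w κ n | κ ≤ degK w (coreIter w κ n) x}

/-- The κ-core `K_κ(w) = ⋂ₙ K^n_κ(w)`. -/
noncomputable def core (w : ℝ → ℝ → ℝ) (κ : ℝ) : Set ℝ := ⋂ n, coreIter w κ n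

/-- Shell index `δ_x(w) = sup {κ : x ∈ K_κ(w)}`. -/
noncomputable def shell (w : ℝ → ℝ → ℝ) (x : ℝ) : ℝ := sSup {κ | x ∈ core w κ}

/-- Degeneracy `δ(w) = sup {κ : |K_κ(w)| > 0}`. -/
noncomputable def degen (w : ℝ → ℝ → ℝ) : ℝ := sSup {κ | 0 < volume (core w κ)}

/-- Cut-norm distance `d_□`. -/
noncomputable def cutDist (w w' : ℝ → ℝ → ℝ) : ℝ :=
  sSup {r | ∃ S T : Set ℝ, MeasurableSet S ∧ MeasurableSet T ∧
    S ⊆ Set.Icc 0 1 ∧ T ⊆ Set.Icc 0 1 ∧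
    r = |∫ x in S, ∫ y in T, (w x y - w' x y)|}

/-- A measure-preserving map of `[0,1]`. -/
def MPMap (σ : ℝ → ℝ) : Prop :=
  Measurable σ ∧ Set.MapsTo σ (Set.Icc 0 1) (Set.Icc 0 1) ∧
    ∀ A : Set ℝ, MeasurableSet A → A ⊆ Set.Icc 0 1 →
      volume (σ ⁻¹' A ∩ Set.Icc 0 1) = volume A

/-- Cut metric `δ_□(w,w') = inf_σ d_□(w^σ, w')`. -/
noncomputable def cutMetric (w w' : ℝ → ℝ → ℝ) : ℝ :=
  sInf {r | ∃ σ : ℝ → ℝ, MPMap σ ∧ r = cutDist (fun x y => w (σ x) (σ y)) w'}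

section aux
variable {w : ℝ → ℝ → ℝ} (hw : Graphon w)

lemma coreIter_subset_Icc (κ : ℝ) : ∀ n, coreIter w κ n ⊆ Set.Icc 0 1
  | 0 => sep_subset _ _
  | n + 1 => (sep_subset _ _).trans (coreIter_subset_Icc κ n)

include hw

lemma aux_int (x : ℝ) (K : Set ℝ) (hK : K ⊆ Set.Icc 0 1) : IntegrableOn (w x) K := by
  refine (Measure.integrableOn_of_bounded (M := 1) ?_ ?_ ?_).mono_set hK
  · simp [Real.volume_Icc]
  · exact (hw.1.comp (measurable_prodMk_left)).aestronglyMeasurable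
  · exact Eventually.of_forall fun y => by
      rw [Real.norm_eq_abs, abs_le]; constructor <;> linarith [(hw.2.2 x y).1, (hw.2.2 x y).2]


lemma degK_measurable {K : Set ℝ} (hK : MeasurableSet K) : Measurable (degK w K) := by
  have : StronglyMeasurable (Function.uncurry w) := hw.1.stronglyMeasurable
  exact (this.integral_prod_right (ν := volume.restrict K)).measurable

lemma coreIter_measurable (κ : ℝ) : ∀ n, MeasurableSet (coreIter w κ n)
  | 0 => measurableSet_Icc.inter ((degK_measurable hw measurableSet_Icc) measurableSet_Ici)
  | n + 1 => (coreIter_measurable κ n).inter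
      ((degK_measurable hw (coreIter_measurable κ n)) measurableSet_Ici)

lemma degK_mono {K K' : Set ℝ} (hKK' : K ⊆ K') (hK : MeasurableSet K) (hK' : K' ⊆ Set.Icc 0 1)
    (x : ℝ) : degK w K x ≤ degK w K' x :=
  setIntegral_mono_set (aux_int hw x K' hK') (Eventually.of_forall fun y => (hw.2.2 x y).1)
    (HasSubset.Subset.eventuallyLE hKK')

lemma coreIter_anti {κ₁ κ₂ : ℝ} (h : κ₁ ≤ κ₂) : ∀ n, coreIter w κ₂ n ⊆ coreIter w κ₁ n
  | 0 => fun x hx => ⟨hx.1, h.trans hx.2⟩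
  | n + 1 => fun x hx =>
      ⟨coreIter_anti h n hx.1, le_trans (h.trans hx.2)
        (degK_mono hw (coreIter_anti h n) (coreIter_measurable hw κ₂ n)
          (coreIter_subset_Icc κ₁ n) x)⟩

lemma core_anti {κ₁ κ₂ : ℝ} (h : κ₁ ≤ κ₂) : core w κ₂ ⊆ core w κ₁ :=
  iInter_mono fun n => coreIter_anti hw h n

lemma key (κ : ℝ) : ∀ m, (⋂ n : ℕ, coreIter w (κ - 1/(n+1)) m) ⊆ coreIter w κ m := by
  have hseq : Tendsto (fun n : ℕ => κ - 1/(n+1)) atTop (nhds κ) := by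
    have := tendsto_one_div_add_atTop_nhds_zero_nat (𝕜 := ℝ)
    simpa using tendsto_const_nhds.sub this
  intro m
  induction m with
  | zero =>
      intro x hx
      simp only [mem_iInter] at hx
      refine ⟨(hx 0).1, le_of_tendsto hseq (Eventually.of_forall fun n => (hx n).2)⟩
  | succ m ih =>
      intro x hx
      simp only [mem_iInter] at hx
      have hx1 : ∀ n : ℕ, x ∈ coreIter w (κ - 1/(n+1)) m := fun n => (hx n).1
      have hxm : x ∈ coreIter w κ m := ih (mem_iInter.2 hx1)
      refine ⟨hxm, ?_⟩
      -- the sets T n := coreIter w (κ - 1/(n+1)) m are antitone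
      set T : ℕ → Set ℝ := fun n => coreIter w (κ - 1/(n+1)) m with hT
      have hanti : Antitone T := by
        intro i j hij
        refine coreIter_anti hw ?_ m
        have : (1:ℝ)/(j+1) ≤ 1/(i+1) := by
          apply one_div_le_one_div_of_le
          · positivity
          · exact_mod_cast Nat.succ_le_succ hij
        linarith
      have hmeas : ∀ n, MeasurableSet (T n) := fun n => coreIter_measurable hw _ m
      have hint : Tendsto (fun n => ∫ y in T n, w x y) atTop
          (nhds (∫ y in ⋂ n, T n, w x y)) :=
        tendsto_setIntegral_of_antitone hmeas hanti
          ⟨0, aux_int hw x _ (coreIter_subset_Icc _ m)⟩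
      have hlb : κ ≤ ∫ y in ⋂ n, T n, w x y :=
        le_of_tendsto_of_tendsto hseq hint
          (Eventually.of_forall fun n => (hx n).2)
      refine hlb.trans ?_
      exact degK_mono hw (ih) (MeasurableSet.iInter hmeas) (coreIter_subset_Icc κ m) x

lemma core_eq (κ : ℝ) : core w κ = ⋂ n : ℕ, core w (κ - 1/(n+1)) := by
  apply Subset.antisymm
  · refine subset_iInter fun n => core_anti hw ?_
    have : (0:ℝ) < 1/(n+1) := by positivity
    linarith
  · intro x hx
    refine mem_iInter.2 fun m => key hw κ m (mem_iInter.2 fun n => ?_)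
    exact mem_iInter.1 (mem_iInter.1 hx n) m

end aux

theorem stmt6 (w : ℝ → ℝ → ℝ) (hw : Graphon w) (κ : ℝ) (hκ : 0 < κ) :
    Filter.Tendsto (fun κ' => volume (core w κ'))
      (nhdsWithin κ (Set.Iio κ)) (nhds (volume (core w κ))) := by
  have hanti : Antitone fun κ' => volume (core w κ') :=
    fun a b h => measure_mono (core_anti hw h)
  have h := hanti.tendsto_nhdsLT κ
  convert h using 2
  -- volume (core w κ) = sInf ((fun κ' => volume (core w κ')) '' Iio κ)
  apply le_antisymm
  · -- ≤ sInf : volume (core κ) ≤ g κ' for all κ' < κ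
    refine le_sInf fun r hr => ?_
    obtain ⟨κ', hκ', rfl⟩ := hr
    exact hanti hκ'.le
  · -- sInf ≤ : via countable sequence
    have hvol : volume (core w κ) = ⨅ n : ℕ, volume (core w (κ - 1/(n+1))) := by
      rw [core_eq hw κ]
      refine Directed.measure_iInter
        (fun n => (MeasurableSet.iInter fun m => coreIter_measurable hw _ m).nullMeasurableSet)
        ?_ ⟨0, ?_⟩
      · intro i j
        have hle : ∀ a b : ℕ, a ≤ b → (1:ℝ)/(b+1) ≤ 1/(a+1) := fun a b hab => by
          apply one_div_le_one_div_of_le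
          · positivity
          · exact_mod_cast Nat.succ_le_succ hab
        refine ⟨max i j, core_anti hw ?_, core_anti hw ?_⟩
        · have := hle i (max i j) (Nat.le_max_left i j); linarith
        · have := hle j (max i j) (Nat.le_max_right i j); linarith
      · refine ne_top_of_le_ne_top ?_ (measure_mono ((core_anti hw le_rfl).trans
          ((iInter_subset _ 0).trans (coreIter_subset_Icc _ 0))))
        simp [Real.volume_Icc]
    rw [hvol]
    refine le_iInf fun n => sInf_le ⟨κ - 1/(n+1), ?_, rfl⟩
    have : (0:ℝ) < 1/(n+1) := by positivity
    simp only [mem_Iio]; linarith
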